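/- arXiv:2505.04187 — 2 statements merged into one kernel-verified Lean document; each statement's English description precedes it below -/
import Mathlib

section
/- Let G be a finite abelian group, let P = (g_1, ..., g_k) be a sequence over G, let g_{k+1} ∈ G, and let S = (g_1, ..., g_k, g_{k+1}) be the sequence obtained by appending g_{k+1} to P. If 0 is not a subsequence sum of S (i.e., S has no nonempty zero-sum subsequence), then |Σ(S)| ≥ |Σ(P)| + 1. -/
/-!
Σ(S) contains Σ(P), the element g_{k+1}, and every x + g_{k+1} with x ∈ Σ(P). If Σ(S) = Σ(P),
then Σ(P) is a finite set containing g_{k+1} and closed under adding g_{k+1}, hence contains 0,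
which is a nonempty zero-sum subsequence of S.
-/

open Finset

section SubsetSums

variable {ι κ G : Type*} [AddCommMonoid G]

def subsetSums (g : ι → G) : Set G :=
  {x | ∃ T : Finset ι, T.Nonempty ∧ ∑ i ∈ T, g i = x}

theorem subsetSums_finite [Finite ι] (g : ι → G) : (subsetSums g).Finite :=
  (Set.finite_range fun T : Finset ι => ∑ i ∈ T, g i).subset <| by
    rintro x ⟨T, -, rfl⟩
    exact ⟨T, rfl⟩

theorem subsetSums_comp_subset (g : κ → G) (e : ι ↪ κ) :
    subsetSums (g ∘ e) ⊆ subsetSums g := by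
  rintro x ⟨T, hT, rfl⟩
  exact ⟨T.map e, hT.map, sum_map T e g⟩

theorem apply_mem_subsetSums (g : ι → G) (j : ι) : g j ∈ subsetSums g :=
  ⟨{j}, singleton_nonempty j, sum_singleton g j⟩

theorem add_apply_mem_subsetSums_of_notMem_range (g : κ → G) (e : ι ↪ κ) {j : κ}
    (hj : j ∉ Set.range e) {x : G} (hx : x ∈ subsetSums (g ∘ e)) :
    x + g j ∈ subsetSums g := by
  classical
  obtain ⟨T, -, rfl⟩ := hx
  have hjT : j ∉ T.map e := fun h => hj (by obtain ⟨i, -, rfl⟩ := mem_map.mp h; exact ⟨i, rfl⟩)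
  refine ⟨insert j (T.map e), insert_nonempty _ _, ?_⟩
  rw [sum_insert hjT, sum_map, add_comm]
  rfl

end SubsetSums

/-- In a finite set closed under adding `a`, adding `a` is a permutation, so `a = b + a` for some
member `b`, i.e. `b = 0`. -/
theorem Set.Finite.zero_mem_of_add_mem {G : Type*} [AddGroup G] {s : Set G} (hs : s.Finite)
    {a : G} (ha : a ∈ s) (hadd : ∀ x ∈ s, x + a ∈ s) : (0 : G) ∈ s := by
  have hmaps : Set.MapsTo (· + a) s s := hadd
  have hbij := (hs.injOn_iff_bijOn_of_mapsTo hmaps).mp (add_left_injective a).injOn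
  obtain ⟨b, hb, hba⟩ := hbij.surjOn ha
  rwa [add_eq_right.mp hba] at hb

theorem stmt_4_general {G : Type*} [AddCommGroup G] (k : ℕ)
    (g : Fin (k + 1) → G)
    (h0 : ∀ T : Finset (Fin (k + 1)), T.Nonempty → ∑ i ∈ T, g i ≠ 0) :
    Set.ncard {x : G | ∃ T : Finset (Fin k),
        T.Nonempty ∧ ∑ i ∈ T, g i.castSucc = x} + 1 ≤
      Set.ncard {x : G | ∃ T : Finset (Fin (k + 1)),
        T.Nonempty ∧ ∑ i ∈ T, g i = x} := by
  change (subsetSums (g ∘ Fin.castSuccEmb)).ncard < (subsetSums g).ncard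
  have hsub := subsetSums_comp_subset g Fin.castSuccEmb
  have hlast : Fin.last k ∉ Set.range Fin.castSuccEmb := by simp
  refine Set.ncard_lt_ncard (hsub.ssubset_of_ne fun heq => ?_) (subsetSums_finite g)
  have hzero : (0 : G) ∈ subsetSums (g ∘ Fin.castSuccEmb) :=
    (subsetSums_finite _).zero_mem_of_add_mem (heq ▸ apply_mem_subsetSums g (Fin.last k))
      fun x hx => heq ▸ add_apply_mem_subsetSums_of_notMem_range g _ hlast hx
  obtain ⟨T, hT, hsum⟩ := hsub hzero
  exact h0 T hT hsum

/-- Lemma: if `S = (g_1, ..., g_{k+1})` has no nonempty zero-sum subsequence and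
`P = (g_1, ..., g_k)`, then `|Σ(S)| ≥ |Σ(P)| + 1`. -/
theorem stmt_4 {G : Type*} [AddCommGroup G] [Fintype G] (k : ℕ)
    (g : Fin (k + 1) → G)
    (h0 : ∀ T : Finset (Fin (k + 1)), T.Nonempty → ∑ i ∈ T, g i ≠ 0) :
    Set.ncard {x : G | ∃ T : Finset (Fin k),
        T.Nonempty ∧ ∑ i ∈ T, g i.castSucc = x} + 1 ≤
      Set.ncard {x : G | ∃ T : Finset (Fin (k + 1)),
        T.Nonempty ∧ ∑ i ∈ T, g i = x} :=
  stmt_4_general k g h0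
end

section
/- Let G be a finite abelian group of order n and let S = (g_1, ..., g_k) be a sequence of k ≤ n elements of G such that 0 is not a subsequence sum of S and |Σ(S)| = k. Then all terms of S are equal: g_1 = g_2 = ... = g_k. -/
/-!
In a zero-sum-free sequence, sums over nested index sets `s ⊂ t` differ, because they differ by
the nonempty sum over `t \ s`. A maximal chain of index sets from `{i, j}` up to `ι` therefore
yields `|ι| - 1` distinct sums, none equal to `g i` or `g j`; if `g i ≠ g j`, this gives
`|Σ(g)| ≥ |ι| + 1`.
-/

section

open Finset

variable {ι G : Type*} [AddCancelCommMonoid G]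

def ZeroSumFree (g : ι → G) : Prop :=
  ∀ T : Finset ι, T.Nonempty → ∑ i ∈ T, g i ≠ 0

def subseqSums (g : ι → G) : Set G :=
  {x | ∃ T : Finset ι, T.Nonempty ∧ ∑ i ∈ T, g i = x}

theorem subseqSums_finite [Finite ι] (g : ι → G) : (subseqSums g).Finite :=
  (Set.finite_range fun T : Finset ι => ∑ i ∈ T, g i).subset fun _ ⟨T, _, hT⟩ => ⟨T, hT⟩

namespace ZeroSumFree

variable [DecidableEq ι] {g : ι → G}

theorem sum_ne_sum_of_ssubset (hg : ZeroSumFree g) {s t : Finset ι} (hst : s ⊂ t) :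
    ∑ i ∈ s, g i ≠ ∑ i ∈ t, g i := by
  intro h
  have hsplit := sum_sdiff (f := g) hst.subset
  rw [← h, add_eq_right] at hsplit
  exact hg _ (sdiff_nonempty.mpr (not_subset_of_ssubset hst)) hsplit

theorem card_sub_card_add_one_le_card_image_Icc [DecidableEq G] (hg : ZeroSumFree g)
    {s t : Finset ι} (hst : s ⊆ t) :
    #t - #s + 1 ≤ #((Icc s t).image fun u => ∑ i ∈ u, g i) := by
  obtain rfl | hst' := hst.eq_or_ssubset
  · simp
  obtain ⟨a, hat, has⟩ := exists_of_ssubset hst'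
  have ih := card_sub_card_add_one_le_card_image_Icc hg (insert_subset hat hst)
  have hsub : (Icc (insert a s) t).image (fun u => ∑ i ∈ u, g i) ⊆
      (Icc s t).image fun u => ∑ i ∈ u, g i :=
    image_subset_image (Icc_subset_Icc_left (subset_insert a s))
  have hnew : ∑ i ∈ s, g i ∉ (Icc (insert a s) t).image fun u => ∑ i ∈ u, g i := by
    simp only [mem_image, mem_Icc, not_exists, not_and, and_imp]
    exact fun u has_u _ => (hg.sum_ne_sum_of_ssubset
      ((ssubset_insert has).trans_le has_u)).symm
  have hmem : ∑ i ∈ s, g i ∈ (Icc s t).image fun u => ∑ i ∈ u, g i :=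
    mem_image_of_mem _ (mem_Icc.mpr ⟨le_rfl, hst⟩)
  calc #t - #s + 1 = #t - #(insert a s) + 1 + 1 := by
        rw [card_insert_of_notMem has]; have := card_lt_card hst'; omega
    _ ≤ #((Icc (insert a s) t).image fun u => ∑ i ∈ u, g i) + 1 := by gcongr
    _ = #(insert (∑ i ∈ s, g i) ((Icc (insert a s) t).image fun u => ∑ i ∈ u, g i)) :=
        (card_insert_of_notMem hnew).symm
    _ ≤ #((Icc s t).image fun u => ∑ i ∈ u, g i) := card_le_card (insert_subset hmem hsub)
termination_by #t - #s
decreasing_by rw [card_insert_of_notMem has]; have := card_lt_card hst'; omega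

theorem card_add_one_le_ncard_subseqSums [Fintype ι] (hg : ZeroSumFree g) {i j : ι}
    (hij : g i ≠ g j) : Fintype.card ι + 1 ≤ (subseqSums g).ncard := by
  classical
  have hne : i ≠ j := fun h => hij (h ▸ rfl)
  set above := (Icc {i, j} univ).image fun u => ∑ x ∈ u, g x
  have h_two : #({i, j} : Finset ι) = 2 := card_pair hne
  have h_above : #univ - #({i, j} : Finset ι) + 1 ≤ #above :=
    hg.card_sub_card_add_one_le_card_image_Icc (subset_univ {i, j})
  have h_outside : ∀ x ∈ ({i, j} : Finset ι), g x ∉ above := by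
    intro x hx
    have hx_ss : {x} ⊂ ({i, j} : Finset ι) :=
      Finset.ssubset_iff_subset_ne.mpr ⟨singleton_subset_iff.mpr hx, fun h => by
        simpa [h_two] using congrArg card h⟩
    simp only [above, mem_image, mem_Icc, not_exists, not_and, and_imp]
    exact fun u hu _ => by simpa using (hg.sum_ne_sum_of_ssubset (hx_ss.trans_le hu)).symm
  have hsub : (insert (g i) (insert (g j) above) : Set G) ⊆ subseqSums g := by
    rintro _ (rfl | rfl | hx)
    · exact ⟨{i}, singleton_nonempty i, sum_singleton g i⟩
    · exact ⟨{j}, singleton_nonempty j, sum_singleton g j⟩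
    · obtain ⟨u, hu, rfl⟩ := mem_image.mp hx
      exact ⟨u, ⟨i, (mem_Icc.mp hu).1 (mem_insert_self i {j})⟩, rfl⟩
  have hcard : #(insert (g i) (insert (g j) above)) = #above + 2 := by
    rw [card_insert_of_notMem (by simp [hij, h_outside i (by simp)]),
      card_insert_of_notMem (h_outside j (by simp))]
  have h_pair_le := card_le_univ ({i, j} : Finset ι)
  calc Fintype.card ι + 1 ≤ #(insert (g i) (insert (g j) above)) := by
        rw [card_univ] at h_above; omega
    _ = (insert (g i) (insert (g j) above) : Set G).ncard := by
        rw [← Set.ncard_coe_finset, coe_insert, coe_insert]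
    _ ≤ (subseqSums g).ncard := Set.ncard_le_ncard hsub (subseqSums_finite g)

theorem eq_of_ncard_subseqSums_le [Fintype ι] (hg : ZeroSumFree g)
    (h : (subseqSums g).ncard ≤ Fintype.card ι) (i j : ι) : g i = g j := by
  by_contra hij
  have := hg.card_add_one_le_ncard_subseqSums hij
  omega

end ZeroSumFree

end

theorem stmt_8_general {G : Type*} [AddCommGroup G] (k : ℕ) (g : Fin k → G)
    (h0 : ∀ T : Finset (Fin k), T.Nonempty → ∑ i ∈ T, g i ≠ 0)
    (hS : Set.ncard {x : G | ∃ T : Finset (Fin k),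
      T.Nonempty ∧ ∑ i ∈ T, g i = x} = k) :
    ∀ i j : Fin k, g i = g j :=
  ZeroSumFree.eq_of_ncard_subseqSums_le (g := g) h0 (hS.trans (Fintype.card_fin k).symm).le

/-- Lemma: if `S = (g_1, ..., g_k)` is a sequence of `k ≤ n = |G|` elements of a finite
abelian group `G` with no nonempty zero-sum subsequence and `|Σ(S)| = k`, then all
terms of `S` are equal. -/
theorem stmt_8 {G : Type*} [AddCommGroup G] [Fintype G] (n k : ℕ)
    (hcard : Fintype.card G = n) (hk : k ≤ n) (g : Fin k → G)
    (h0 : ∀ T : Finset (Fin k), T.Nonempty → ∑ i ∈ T, g i ≠ 0)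
    (hS : Set.ncard {x : G | ∃ T : Finset (Fin k),
      T.Nonempty ∧ ∑ i ∈ T, g i = x} = k) :
    ∀ i j : Fin k, g i = g j :=
  stmt_8_general k g h0 hS
end
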